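/- Let (G,σ) be a signed graph and let k, d be positive integers with 2d ≤ k. Then (G,σ) has a (2k, 2d)-coloring if and only if (G,σ) has a circular (k/d)-coloring. -/

import Mathlib

variable {V : Type*}

/-- A signature of a graph `G`: a symmetric function assigning `+1` or `-1` to each edge. -/
def IsSignature (G : SimpleGraph V) (σ : V → V → ℤ) : Prop :=
  (∀ v w, σ v w = σ w v) ∧ ∀ v w, G.Adj v w → σ v w = 1 ∨ σ v w = -1

/-- `c : V → ZMod k` is a `(k,d)`-coloring of the signed graph `(G,σ)`:
for every edge `vw`, `|c v - σ(vw) * c w|_k ≥ d`, where `|x|_k = min([x]_k, [-x]_k)`. -/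
def IsKDColoring (G : SimpleGraph V) (σ : V → V → ℤ) (k d : ℕ) (c : V → ZMod k) : Prop :=
  ∀ v w, G.Adj v w →
    d ≤ min (ZMod.val (c v - (σ v w : ZMod k) * c w))
            (ZMod.val (-(c v - (σ v w : ZMod k) * c w)))

/-- `(G,σ)` has a `(k,d)`-coloring (with the standing assumptions `k,d ≥ 1`, `k ≥ 2d`). -/
def HasKDColoring (G : SimpleGraph V) (σ : V → V → ℤ) (k d : ℕ) : Prop :=
  0 < k ∧ 0 < d ∧ 2 * d ≤ k ∧ ∃ c : V → ZMod k, IsKDColoring G σ k d c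

/-- The circular chromatic number of a signed graph: the infimum of `k/d` over all
pairs `(k,d)` for which a `(k,d)`-coloring exists. -/
noncomputable def chiC (G : SimpleGraph V) (σ : V → V → ℤ) : ℝ :=
  sInf { r : ℝ | ∃ k d : ℕ, HasKDColoring G σ k d ∧ r = (k : ℝ) / d }

/-- The chromatic number of a signed graph: the least `k` with a `(k,1)`-coloring. -/
noncomputable def chi (G : SimpleGraph V) (σ : V → V → ℤ) : ℕ :=
  sInf { k : ℕ | HasKDColoring G σ k 1 }

/-- A circular `r`-coloring of the signed graph `(G,σ)`: a map `f : V → [0,r)` such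
that for each edge `xy`, if `σ(xy) = 1` then `1 ≤ |f x - f y| ≤ r - 1`, and if
`σ(xy) = -1` then `1 ≤ |f x + f y - r| ≤ r - 1`. -/
def IsCircularColoring (G : SimpleGraph V) (σ : V → V → ℤ) (r : ℝ) (f : V → ℝ) : Prop :=
  (∀ v, 0 ≤ f v ∧ f v < r) ∧
  ∀ v w, G.Adj v w →
    (σ v w = 1 → 1 ≤ |f v - f w| ∧ |f v - f w| ≤ r - 1) ∧
    (σ v w = -1 → 1 ≤ |f v + f w - r| ∧ |f v + f w - r| ≤ r - 1)

/-!
A `(2k,2d)`-coloring `c`, with `c v` read as an integer in `[0, 2k)`, directly gives the circular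
coloring `v ↦ c v / (2d)`. Conversely, given a circular `k/d`-coloring `f`, round each `2d · f v`
to a nearest integer, breaking ties towards odd integers. On an edge, the relevant real quantity
`2d (f v - f w)` or `2d (f v + f w) - 2k` has absolute value in `[2d, 2k - 2d]`, and its rounded
counterpart is off by at most `1`, by exactly `1` only when both roundings were ties; then both
rounded values are odd and their sum or difference is even. Since the bounds `2d` and `2k - 2d` are
even, the rounded quantity cannot leave the window, which is the `(2k,2d)`-coloring condition.
-/

theorem le_min_val_neg_intCast_iff {n d : ℕ} (hd : 0 < d) {D : ℤ} (hD : |D| ≤ n) :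
    d ≤ min (D : ZMod n).val (-(D : ZMod n)).val ↔ (d : ℤ) ≤ |D| ∧ |D| ≤ n - d := by
  have key : ∀ m : ℕ, m ≤ n →
      (d ≤ min (m : ZMod n).val (-(m : ZMod n)).val ↔ (d : ℤ) ≤ m ∧ (m : ℤ) ≤ n - d) := by
    intro m hm
    rcases hm.eq_or_lt with rfl | hm
    · simp only [ZMod.natCast_self, neg_zero, ZMod.val_zero]
      omega
    have : NeZero n := ⟨by omega⟩
    have hval : (m : ZMod n).val = m := ZMod.val_natCast_of_lt hm
    rw [ZMod.neg_val, hval]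
    split_ifs with h0
    · rw [← ZMod.val_eq_zero, hval] at h0
      omega
    · omega
  obtain ⟨m, rfl | rfl⟩ := Int.eq_nat_or_neg D
  · simpa using key m (by simpa using hD)
  · simpa [min_comm] using key m (by simpa using hD)

def IsOddTieRounding (a : ℤ) (x : ℝ) : Prop :=
  |(a : ℝ) - x| ≤ 1 / 2 ∧ (|(a : ℝ) - x| = 1 / 2 → Odd a)

def IsEvenTieApprox (D : ℤ) (T : ℝ) : Prop :=
  |(D : ℝ) - T| ≤ 1 ∧ (|(D : ℝ) - T| = 1 → Even D)

theorem exists_isOddTieRounding (x : ℝ) : ∃ a : ℤ, IsOddTieRounding a x := by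
  have h0 := Int.fract_nonneg x
  have h1 := Int.fract_lt_one x
  have hdown : |(⌊x⌋ : ℝ) - x| = Int.fract x := by
    rw [← neg_sub, abs_neg, Int.self_sub_floor, abs_of_nonneg h0]
  have hup : |((⌊x⌋ + 1 : ℤ) : ℝ) - x| = 1 - Int.fract x := by
    have := Int.self_sub_floor x
    rw [abs_of_nonneg (by push_cast; linarith)]
    push_cast
    linarith
  rcases lt_trichotomy (Int.fract x) (1 / 2) with hlt | heq | hgt
  · exact ⟨⌊x⌋, hdown ▸ hlt.le, fun h => absurd (hdown ▸ h) hlt.ne⟩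
  · rcases Int.even_or_odd ⌊x⌋ with he | ho
    · exact ⟨⌊x⌋ + 1, by rw [hup, heq]; norm_num, fun _ => he.add_one⟩
    · exact ⟨⌊x⌋, by rw [hdown, heq], fun _ => ho⟩
  · refine ⟨⌊x⌋ + 1, by rw [hup]; linarith, fun h => ?_⟩
    rw [hup] at h
    linarith

namespace IsOddTieRounding

variable {a b : ℤ} {x y : ℝ}

theorem neg (ha : IsOddTieRounding a x) : IsOddTieRounding (-a) (-x) := by
  have h : ((-a : ℤ) : ℝ) - -x = -((a : ℝ) - x) := by push_cast; ring
  simpa only [IsOddTieRounding, h, abs_neg, odd_neg] using ha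

theorem add (ha : IsOddTieRounding a x) (hb : IsOddTieRounding b y) :
    IsEvenTieApprox (a + b) (x + y) := by
  have h : ((a + b : ℤ) : ℝ) - (x + y) = ((a : ℝ) - x) + ((b : ℝ) - y) := by push_cast; ring
  have htri := abs_add_le ((a : ℝ) - x) ((b : ℝ) - y)
  rw [IsEvenTieApprox, h]
  refine ⟨by linarith [ha.1, hb.1], fun h1 => ?_⟩
  have hxa : |(a : ℝ) - x| = 1 / 2 := by linarith [ha.1, hb.1]
  have hyb : |(b : ℝ) - y| = 1 / 2 := by linarith [ha.1, hb.1]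
  exact (ha.2 hxa).add_odd (hb.2 hyb)

theorem sub (ha : IsOddTieRounding a x) (hb : IsOddTieRounding b y) :
    IsEvenTieApprox (a - b) (x - y) := by
  simpa only [sub_eq_add_neg] using ha.add hb.neg

end IsOddTieRounding

namespace IsEvenTieApprox

variable {D : ℤ} {T : ℝ}

theorem sub_even (hD : IsEvenTieApprox D T) {m : ℤ} (hm : Even m) :
    IsEvenTieApprox (D - m) (T - m) := by
  have h : ((D - m : ℤ) : ℝ) - (T - m) = (D : ℝ) - T := by push_cast; ring
  rw [IsEvenTieApprox, h]
  exact ⟨hD.1, fun h1 => (hD.2 h1).sub hm⟩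

theorem abs (hD : IsEvenTieApprox D T) : IsEvenTieApprox |D| |T| := by
  have h := abs_abs_sub_abs_le_abs_sub (D : ℝ) T
  rw [IsEvenTieApprox, Int.cast_abs]
  refine ⟨h.trans hD.1, fun h1 => even_abs.2 (hD.2 (le_antisymm hD.1 (h1 ▸ h)))⟩

theorem neg (hD : IsEvenTieApprox D T) : IsEvenTieApprox (-D) (-T) := by
  have h : ((-D : ℤ) : ℝ) - -T = -((D : ℝ) - T) := by push_cast; ring
  simpa only [IsEvenTieApprox, h, abs_neg, even_neg] using hD

/-- `D` can only drop to the odd integer `L - 1` with an error of exactly `1`, which forces `D`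
to be even. -/
theorem le_of_le (hD : IsEvenTieApprox D T) {L : ℤ} (hL : Even L) (hLT : (L : ℝ) ≤ T) :
    L ≤ D := by
  have hlow : (L : ℝ) - 1 ≤ D := by linarith [(abs_le.1 hD.1).1]
  have hlow' : L - 1 ≤ D := by exact_mod_cast hlow
  by_contra hlt
  have hDL : D = L - 1 := by omega
  have herr : |(D : ℝ) - T| = 1 := by
    refine le_antisymm hD.1 ?_
    rw [abs_sub_comm, hDL]
    push_cast
    exact le_abs.2 (Or.inl (by linarith))
  exact Int.not_even_iff_odd.2 (hL.sub_odd odd_one) (hDL ▸ hD.2 herr)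

theorem le_of_ge (hD : IsEvenTieApprox D T) {U : ℤ} (hU : Even U) (hTU : T ≤ U) : D ≤ U := by
  have := hD.neg.le_of_le hU.neg (by push_cast; linarith)
  omega

theorem abs_mem_Icc (hD : IsEvenTieApprox D T) {L U : ℤ} (hL : Even L) (hU : Even U)
    (hT : |T| ∈ Set.Icc (L : ℝ) U) : |D| ∈ Set.Icc L U :=
  ⟨hD.abs.le_of_le hL hT.1, hD.abs.le_of_ge hU hT.2⟩

end IsEvenTieApprox

theorem one_le_abs_and_abs_le_sub_one_iff {s : ℝ} (hs : 0 < s) (a r : ℝ) :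
    (1 ≤ |a| ∧ |a| ≤ r - 1) ↔ (s ≤ |s * a| ∧ |s * a| ≤ s * r - s) := by
  rw [abs_mul, abs_of_pos hs, ← mul_sub_one, mul_le_mul_iff_right₀ hs, le_mul_iff_one_le_right hs]

theorem IsKDColoring.isCircularColoring {G : SimpleGraph V} {σ : V → V → ℤ} {n e : ℕ} [NeZero n]
    (he : 0 < e) {c : V → ZMod n} (hc : IsKDColoring G σ n e c) :
    IsCircularColoring G σ (n / e) (fun v => (c v).val / e) := by
  have he' : (0 : ℝ) < e := by exact_mod_cast he
  have edge : ∀ D : ℤ, |D| ≤ n → e ≤ min (D : ZMod n).val (-(D : ZMod n)).val →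
      1 ≤ |(D : ℝ) / e| ∧ |(D : ℝ) / e| ≤ n / e - 1 := by
    intro D hD h
    obtain ⟨h1, h2⟩ := (le_min_val_neg_intCast_iff he hD).1 h
    rw [one_le_abs_and_abs_le_sub_one_iff he', mul_div_cancel₀ _ he'.ne', mul_div_cancel₀ _ he'.ne',
      ← Int.cast_abs]
    exact ⟨by exact_mod_cast h1, by exact_mod_cast h2⟩
  have hval : ∀ v, (((c v).val : ℤ) : ZMod n) = c v := fun v => by simp
  have hbd : ∀ v w, |((c v).val - (c w).val : ℤ)| ≤ n ∧ |((c v).val + (c w).val - n : ℤ)| ≤ n := by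
    intro v w
    have := (c v).val_lt
    have := (c w).val_lt
    constructor <;> rw [abs_le] <;> constructor <;> omega
  refine ⟨fun v => ⟨by positivity, ?_⟩, fun v w hvw => ⟨fun h => ?_, fun h => ?_⟩⟩
  · exact div_lt_div_of_pos_right (by exact_mod_cast (c v).val_lt) he'
  · have hD : c v - (σ v w : ZMod n) * c w = (((c v).val - (c w).val : ℤ) : ZMod n) := by
      rw [h, Int.cast_sub, hval, hval, Int.cast_one, one_mul]
    have := edge _ (hbd v w).1 (hD ▸ hc v w hvw)
    simpa only [Int.cast_sub, Int.cast_natCast, sub_div] using this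
  · have hD : c v - (σ v w : ZMod n) * c w = (((c v).val + (c w).val - n : ℤ) : ZMod n) := by
      rw [h, Int.cast_sub, Int.cast_add, hval, hval, Int.cast_natCast, ZMod.natCast_self]
      push_cast
      ring
    have := edge _ (hbd v w).2 (hD ▸ hc v w hvw)
    simpa only [Int.cast_sub, Int.cast_add, Int.cast_natCast, sub_div, add_div] using this

theorem IsCircularColoring.exists_isKDColoring {G : SimpleGraph V} {σ : V → V → ℤ}
    (hσ : ∀ v w, G.Adj v w → σ v w = 1 ∨ σ v w = -1) {k d : ℕ} (hd : 0 < d) {f : V → ℝ}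
    (hf : IsCircularColoring G σ (k / d) f) :
    ∃ c : V → ZMod (2 * k), IsKDColoring G σ (2 * k) (2 * d) c := by
  choose R hR using fun v => exists_isOddTieRounding (2 * d * f v)
  have hs : (0 : ℝ) < 2 * d := by positivity
  have hr : (2 * d : ℝ) * (k / d) = 2 * k := by field_simp
  have edge : ∀ (D : ℤ) (T : ℝ), IsEvenTieApprox D T → (2 * d : ℝ) ≤ |T| ∧ |T| ≤ 2 * k - 2 * d →
      2 * d ≤ min (D : ZMod (2 * k)).val (-(D : ZMod (2 * k))).val := by
    intro D T hDT hT
    obtain ⟨h1, h2⟩ := hDT.abs_mem_Icc (L := 2 * d) (U := 2 * k - 2 * d) ⟨d, two_mul _⟩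
      ⟨k - d, by ring⟩ (by push_cast; exact hT)
    exact (le_min_val_neg_intCast_iff (by omega) (by push_cast; omega)).2
      ⟨by push_cast; exact h1, by push_cast; exact h2⟩
  refine ⟨fun v => R v, fun v w hvw => ?_⟩
  have hfe := hf.2 v w hvw
  rcases hσ v w hvw with h | h
  · have hT := (one_le_abs_and_abs_le_sub_one_iff hs _ _).1 (hfe.1 h)
    rw [hr, mul_sub] at hT
    have := edge _ _ ((hR v).sub (hR w)) hT
    rwa [h, Int.cast_one, one_mul, ← Int.cast_sub]
  · have hT := (one_le_abs_and_abs_le_sub_one_iff hs _ _).1 (hfe.2 h)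
    rw [hr, mul_sub, hr, mul_add] at hT
    have := edge _ _ (((hR v).add (hR w)).sub_even (m := 2 * k) ⟨k, two_mul _⟩)
      (by push_cast; exact hT)
    have h2k : (2 * k : ZMod (2 * k)) = 0 := by exact_mod_cast ZMod.natCast_self (2 * k)
    have hD : ((R v : ℤ) : ZMod (2 * k)) - ((σ v w : ℤ) : ZMod (2 * k)) * (R w : ℤ) =
        ((R v + R w - 2 * k : ℤ) : ZMod (2 * k)) := by
      rw [h]; push_cast; rw [h2k]; ring
    exact hD ▸ this

theorem hasKDColoring_iff_circular_general
    (G : SimpleGraph V) (σ : V → V → ℤ) (hσ : IsSignature G σ)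
    (k d : ℕ) (hd : 0 < d) (hkd : 2 * d ≤ k) :
    HasKDColoring G σ (2 * k) (2 * d) ↔ ∃ f : V → ℝ, IsCircularColoring G σ ((k : ℝ) / d) f := by
  constructor
  · rintro ⟨hn, he, -, c, hc⟩
    have : NeZero (2 * k) := ⟨hn.ne'⟩
    have hcirc := hc.isCircularColoring he
    rw [Nat.cast_mul, Nat.cast_mul, Nat.cast_two, mul_div_mul_left _ _ two_ne_zero] at hcirc
    exact ⟨_, hcirc⟩
  · rintro ⟨f, hf⟩
    exact ⟨by omega, by omega, by omega, hf.exists_isKDColoring hσ.2 hd⟩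

/-- A signed graph has a `(2k,2d)`-coloring if and only if it has a circular
`(k/d)`-coloring. -/
theorem hasKDColoring_iff_circular
    (G : SimpleGraph V) (σ : V → V → ℤ) (hσ : IsSignature G σ)
    (k d : ℕ) (hk : 0 < k) (hd : 0 < d) (hkd : 2 * d ≤ k) :
    HasKDColoring G σ (2 * k) (2 * d) ↔ ∃ f : V → ℝ, IsCircularColoring G σ ((k : ℝ) / d) f :=
  hasKDColoring_iff_circular_general G σ hσ k d hd hkd
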